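/- arXiv:1706.03429 — 3 statements merged into one kernel-verified Lean document; each statement's English description precedes it below -/
import Mathlib

section
/- Let n and s be positive integers with n < s². Then the maximum of a+b over all integers a, b with 0 ≤ a, b ≤ s and s(a+b) − ab ≤ n equals 2s − ⌈2√(s² − n)⌉. -/
/-!
With `u = s - a`, `v = s - b` the constraint reads `s² - n ≤ u v`, so the claim is that the least
value of `u + v` over `0 ≤ u, v ≤ s` with `u v ≥ M := s² - n` is `k = ⌈2√M⌉`. AM-GM gives
`2√M ≤ u + v`, hence `k ≤ u + v`; conversely `4M ≤ k²` and `M` is an integer, so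
`M ≤ ⌊k²/4⌋ = ⌊k/2⌋ ⌈k/2⌉`, and `u = ⌈k/2⌉`, `v = ⌊k/2⌋` attain `u + v = k`.
-/

namespace Real

theorem two_mul_sqrt_le_add_of_le_mul {M u v : ℝ} (hu : 0 ≤ u) (hv : 0 ≤ v) (h : M ≤ u * v) :
    2 * √M ≤ u + v := by
  have : √M ≤ (u + v) / 2 := by
    rw [sqrt_le_left (by positivity)]
    nlinarith [four_mul_le_sq_add u v]
  linarith

theorem four_mul_le_sq_ceil_two_mul_sqrt (M : ℝ) : 4 * M ≤ (⌈2 * √M⌉ : ℝ) ^ 2 := by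
  rcases lt_or_ge M 0 with hM | hM
  · nlinarith [sq_nonneg (⌈2 * √M⌉ : ℝ)]
  · have hceil : 2 * √M ≤ ⌈2 * √M⌉ := Int.le_ceil _
    calc 4 * M = (2 * √M) ^ 2 := by rw [mul_pow, sq_sqrt hM]; norm_num
      _ ≤ (⌈2 * √M⌉ : ℝ) ^ 2 := pow_le_pow_left₀ (by positivity) hceil 2

end Real

namespace Int

theorem ceil_two_mul_sqrt_le_add_of_le_mul {M u v : ℤ} (hu : 0 ≤ u) (hv : 0 ≤ v)
    (h : M ≤ u * v) : ⌈2 * √(M : ℝ)⌉ ≤ u + v := by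
  rw [ceil_le]
  push_cast
  exact Real.two_mul_sqrt_le_add_of_le_mul (by exact_mod_cast hu) (by exact_mod_cast hv)
    (by exact_mod_cast h)

theorem le_ediv_two_mul_of_four_mul_le_sq {M k : ℤ} (h : 4 * M ≤ k ^ 2) :
    M ≤ k / 2 * (k - k / 2) := by
  rcases even_or_odd k with ⟨t, rfl⟩ | ⟨t, rfl⟩
  · have hdiv : (t + t) / 2 = t := by omega
    rw [hdiv]
    nlinarith
  · have hdiv : (2 * t + 1) / 2 = t := by omega
    rw [hdiv]
    -- `4M ≤ 4t(t+1) + 1` forces `M ≤ t(t+1)` by integrality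
    have : 4 * M ≤ 4 * (t * (t + 1)) + 1 := by linarith
    have : M ≤ t * (t + 1) := by omega
    linarith

end Int

theorem stmt_0_general (n s : ℕ) :
    IsGreatest {x : ℤ | ∃ a b : ℤ, 0 ≤ a ∧ a ≤ (s : ℤ) ∧ 0 ≤ b ∧ b ≤ (s : ℤ) ∧
        (s : ℤ) * (a + b) - a * b ≤ (n : ℤ) ∧ x = a + b}
      (2 * (s : ℤ) - ⌈2 * Real.sqrt ((s : ℝ) ^ 2 - (n : ℝ))⌉) := by
  set M : ℤ := (s : ℤ) ^ 2 - n with hM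
  have hcast : (s : ℝ) ^ 2 - n = (M : ℝ) := by push_cast [hM]; ring
  rw [hcast]
  set k := ⌈2 * √(M : ℝ)⌉
  have hk0 : 0 ≤ k := Int.ceil_nonneg (by positivity)
  have hks : k ≤ s + s :=
    Int.ceil_two_mul_sqrt_le_add_of_le_mul (by positivity) (by positivity) (by rw [hM]; nlinarith)
  have hkM : M ≤ k / 2 * (k - k / 2) :=
    Int.le_ediv_two_mul_of_four_mul_le_sq (by exact_mod_cast Real.four_mul_le_sq_ceil_two_mul_sqrt M)
  constructor
  · refine ⟨s - (k - k / 2), s - k / 2, by omega, by omega, by omega, by omega, ?_, by ring⟩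
    linear_combination hkM
  · rintro x ⟨a, b, -, has, -, hbs, hab, rfl⟩
    have : k ≤ (s - a) + (s - b) :=
      Int.ceil_two_mul_sqrt_le_add_of_le_mul (by omega) (by omega) (by linear_combination hab)
    omega

theorem stmt_0 (n s : ℕ) (hn : 0 < n) (hs : 0 < s) (h : n < s ^ 2) :
    IsGreatest {x : ℤ | ∃ a b : ℤ, 0 ≤ a ∧ a ≤ (s : ℤ) ∧ 0 ≤ b ∧ b ≤ (s : ℤ) ∧
        (s : ℤ) * (a + b) - a * b ≤ (n : ℤ) ∧ x = a + b}
      (2 * (s : ℤ) - ⌈2 * Real.sqrt ((s : ℝ) ^ 2 - (n : ℝ))⌉) :=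
  stmt_0_general n s
end

section
/- Let n and s be positive integers with n < s². Then the maximum of a+b over all real numbers a, b with 0 ≤ a, b ≤ s and s(a+b) − ab ≤ n equals 2(s − √(s² − n)). -/
/-! Writing `u = s - a`, `v = s - b`, the constraint becomes `s² - n ≤ u v` and `a + b = 2 s - (u + v)`.
By AM-GM, `u + v ≥ 2 √(u v) ≥ 2 √(s² - n)`, with equality at `u = v = √(s² - n)`. -/

lemma two_sqrt_le_add_of_le_mul {u v c : ℝ} (hu : 0 ≤ u) (hv : 0 ≤ v) (hc : c ≤ u * v) :
    2 * √c ≤ u + v := by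
  have hsq : (2 * √c) ^ 2 ≤ (u + v) ^ 2 := by
    rw [mul_pow, Real.sq_sqrt']
    have : max c 0 ≤ u * v := max_le hc (mul_nonneg hu hv)
    nlinarith [sq_nonneg (u - v)]
  exact (pow_le_pow_iff_left₀ (by positivity) (add_nonneg hu hv) two_ne_zero).mp hsq

theorem isGreatest_add_of_mul_sub_mul_le {s m : ℝ} (hs : 0 ≤ s) (hm : 0 ≤ m) :
    IsGreatest {x : ℝ | ∃ a b : ℝ, 0 ≤ a ∧ a ≤ s ∧ 0 ≤ b ∧ b ≤ s ∧ s * (a + b) - a * b ≤ m ∧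
        x = a + b}
      (2 * (s - √(s ^ 2 - m))) := by
  set r := √(s ^ 2 - m)
  have hr_nonneg : 0 ≤ r := Real.sqrt_nonneg _
  have hr_le : r ≤ s := (Real.sqrt_le_left hs).mpr (by linarith)
  have hr_sq : s ^ 2 - m ≤ r ^ 2 := by
    rw [Real.sq_sqrt']
    exact le_max_left _ _
  constructor
  · refine ⟨s - r, s - r, by linarith, by linarith, by linarith, by linarith, ?_, by ring⟩
    nlinarith
  · rintro _ ⟨a, b, -, has, -, hbs, hab, rfl⟩
    have hprod : s ^ 2 - m ≤ (s - a) * (s - b) := by nlinarith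
    have := two_sqrt_le_add_of_le_mul (sub_nonneg.mpr has) (sub_nonneg.mpr hbs) hprod
    linarith

theorem stmt_1_general (n s : ℕ) :
    IsGreatest {x : ℝ | ∃ a b : ℝ, 0 ≤ a ∧ a ≤ (s : ℝ) ∧ 0 ≤ b ∧ b ≤ (s : ℝ) ∧
        (s : ℝ) * (a + b) - a * b ≤ (n : ℝ) ∧ x = a + b}
      (2 * ((s : ℝ) - Real.sqrt ((s : ℝ) ^ 2 - (n : ℝ)))) :=
  isGreatest_add_of_mul_sub_mul_le (Nat.cast_nonneg s) (Nat.cast_nonneg n)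

theorem stmt_1 (n s : ℕ) (hn : 0 < n) (hs : 0 < s) (h : n < s ^ 2) :
    IsGreatest {x : ℝ | ∃ a b : ℝ, 0 ≤ a ∧ a ≤ (s : ℝ) ∧ 0 ≤ b ∧ b ≤ (s : ℝ) ∧
        (s : ℝ) * (a + b) - a * b ≤ (n : ℝ) ∧ x = a + b}
      (2 * ((s : ℝ) - Real.sqrt ((s : ℝ) ^ 2 - (n : ℝ)))) :=
  stmt_1_general n s
end

section
/- Let n, s be positive integers with n < s² and let α = s − √(s² − n). If α − ⌊α⌋ ≥ 1/2, then with a = ⌊α⌋ and b = ⌊α⌋ + 1 one has ab − s(a+b) + n ≥ 0. -/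
/-!
Write `a = ⌊α⌋`, `t = α - a` and `r = √(s² - n)`, so `s - a = r + t` and `n = s² - r²`.
Then `ab - s(a+b) + n = (s - a)(s - a - 1) - r² = r(2t - 1) + t(t - 1) ≥ -1/4`
as soon as `t ≥ 1/2`, and an integer that is at least `-1/4` is nonnegative.
-/

lemma neg_quarter_le_floor_mul_floor_add_one_sub (s r : ℝ) (hr : 0 ≤ r)
    (hfract : 1 / 2 ≤ (s - r) - ⌊s - r⌋) :
    -(1 / 4) ≤ ⌊s - r⌋ * (⌊s - r⌋ + 1) - s * (2 * ⌊s - r⌋ + 1) + (s ^ 2 - r ^ 2) := by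
  set a : ℝ := (⌊s - r⌋ : ℝ)
  set t := (s - r) - a
  have hs : s = r + t + a := by simp only [t]; ring
  have expand :
      a * (a + 1) - s * (2 * a + 1) + (s ^ 2 - r ^ 2) = r * (2 * t - 1) + t * (t - 1) := by
    rw [hs]; ring
  rw [expand]
  nlinarith [sq_nonneg (t - 1 / 2)]

theorem stmt_4_general (n s : ℕ) (h : n < s ^ 2) :
    let α : ℝ := (s : ℝ) - Real.sqrt ((s : ℝ) ^ 2 - (n : ℝ))
    α - ⌊α⌋ ≥ 1 / 2 →
      let a : ℤ := ⌊α⌋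
      let b : ℤ := ⌊α⌋ + 1
      a * b - (s : ℤ) * (a + b) + (n : ℤ) ≥ 0 := by
  intro α hfract a b
  have hn : (n : ℝ) ≤ (s : ℝ) ^ 2 := by exact_mod_cast h.le
  have hr := neg_quarter_le_floor_mul_floor_add_one_sub s _ (Real.sqrt_nonneg _) hfract
  rw [Real.sq_sqrt (sub_nonneg.mpr hn), sub_sub_cancel] at hr
  have : (-1 : ℤ) < a * b - (s : ℤ) * (a + b) + n := by
    have : (-1 : ℝ) < ((a * b - (s : ℤ) * (a + b) + n : ℤ) : ℝ) := by
      push_cast [a, b]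
      linarith
    exact_mod_cast this
  omega

theorem stmt_4 (n s : ℕ) (hn : 0 < n) (hs : 0 < s) (h : n < s ^ 2) :
    let α : ℝ := (s : ℝ) - Real.sqrt ((s : ℝ) ^ 2 - (n : ℝ))
    α - ⌊α⌋ ≥ 1 / 2 →
      let a : ℤ := ⌊α⌋
      let b : ℤ := ⌊α⌋ + 1
      a * b - (s : ℤ) * (a + b) + (n : ℤ) ≥ 0 :=
  stmt_4_general n s h
end
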